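/- Preemption and irrelevance in σ2: in the concrete autonomous-car model, the set of achievement-cause indices of the causal setting with narrative σ2 started in S0 and effect damaged is exactly {0, 2, 4, 5}; that is, AchCause σ2 S0 (fun s => s.damaged = true) i holds if and only if i ∈ {0, 2, 4, 5}. In particular, the second hack (index 3) is not an achievement cause since it was preempted by the first hack (indeed run (σ2.take 4) S0 = run (σ2.take 3) S0, the second hack changes nothing), the non-cause turn J (index 1) is not a cause, and the trailing irrelevant actions turn K (index 6) and drive K J (index 7) are not causes. -/
import Mathlib


inductive Loc : Type
  | I | J | K
deriving DecidableEq

open Loc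

def connected : Loc → Loc → Prop
  | I, J => True
  | J, I => True
  | J, K => True
  | K, J => True
  | _, _ => False

inductive Act : Type
  | drive (i j : Loc)
  | turn (i : Loc)
  | hack
deriving DecidableEq

open Act

structure State : Type where
  pos : Loc
  corrupted : Bool
  damaged : Bool

def step : Act → State → State
  | drive _ j, s => ⟨j, s.corrupted, s.damaged⟩
  | turn _, s => ⟨s.pos, s.corrupted, s.corrupted || s.damaged⟩
  | hack, s => ⟨s.pos, true, s.damaged⟩

def poss : Act → State → Prop
  | drive i j, s => s.pos = i ∧ i ≠ j ∧ connected i j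
  | turn i, s => s.pos = i
  | hack, _ => True

def run (l : List Act) (s : State) : State :=
  l.foldl (fun t a => step a t) s

def executable (l : List Act) (s : State) : Prop :=
  ∀ k : Fin l.length, poss (l.get k) (run (l.take k) s)

def σ1 : List Act := [drive I J, turn J, hack, drive J K, turn K]

def S0 : State := ⟨I, false, false⟩

def S0star : State := ⟨I, true, false⟩

def AchCause : List Act → State → (State → Prop) → ℕ → Prop
  | l, s0, φ, i =>
    ∃ j, ∃ _h1 : 1 ≤ j, ∃ _h2 : j ≤ l.length,
      ¬ φ (run (l.take (j - 1)) s0) ∧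
      (∀ k, j ≤ k → k ≤ l.length → φ (run (l.take k) s0)) ∧
      (i = j - 1 ∨
        AchCause (l.take (j - 1)) s0
          (fun s => φ (step (l.get ⟨j - 1, by omega⟩) s) ∧
            poss (l.get ⟨j - 1, by omega⟩) s) i)
  termination_by l _ _ _ => l.length
  decreasing_by simp [List.length_take]; omega

def σ2 : List Act :=
  [Act.drive Loc.I Loc.J, Act.turn Loc.J, Act.hack, Act.hack, Act.drive Loc.J Loc.K,
   Act.turn Loc.K, Act.turn Loc.K, Act.drive Loc.K Loc.J]


def P1 : State → Prop := fun s => (step (turn K) s).damaged = true ∧ poss (turn K) s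
def P2 : State → Prop := fun s => P1 (step (drive J K) s) ∧ poss (drive J K) s
def P3 : State → Prop := fun s => P2 (step hack s) ∧ poss hack s

lemma L4 (φ : State → Prop) (i : ℕ) : ¬ AchCause ([] : List Act) S0 φ i := by
  rw [AchCause]
  rintro ⟨j, h1, h2, -⟩
  simp at h2; omega

lemma L3 (i : ℕ) : AchCause [drive I J, turn J] S0 P3 i ↔ i = 0 := by
  constructor
  · intro h
    rw [AchCause] at h
    obtain ⟨j, h1, h2, hneg, hall, hc⟩ := h
    simp only [List.length_cons, List.length_nil] at h2
    interval_cases j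
    · rcases hc with h | h
      · omega
      · exact absurd h (L4 _ i)
    · exact absurd (by simp [P3, P2, P1, step, poss, run, S0, connected]) hneg
  · rintro rfl
    rw [AchCause]
    refine ⟨1, le_refl 1, by simp, ?_, ?_, Or.inl rfl⟩
    · simp [P3, P2, P1, step, poss, run, S0, connected]
    · intro k hk1 hk2
      simp only [List.length_cons, List.length_nil] at hk2
      interval_cases k <;> simp [P3, P2, P1, step, poss, run, S0, connected]

lemma L2 (i : ℕ) :
    AchCause [drive I J, turn J, hack, hack] S0 P2 i ↔ (i = 0 ∨ i = 2) := by
  constructor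
  · intro h
    rw [AchCause] at h
    obtain ⟨j, h1, h2, hneg, hall, hc⟩ := h
    simp only [List.length_cons, List.length_nil] at h2
    interval_cases j
    · exact absurd (hall 1 le_rfl (by simp)) (by simp [P2, P1, step, poss, run, S0, connected])
    · exact absurd (hall 2 le_rfl (by simp)) (by simp [P2, P1, step, poss, run, S0, connected])
    · rcases hc with h | h
      · right; omega
      · left; exact (L3 i).mp h
    · exact absurd (by simp [P2, P1, step, poss, run, S0, connected]) hneg
  · intro h
    rw [AchCause]
    refine ⟨3, by omega, by simp, ?_, ?_, ?_⟩
    · simp [P2, P1, step, poss, run, S0, connected]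
    · intro k hk1 hk2
      simp only [List.length_cons, List.length_nil] at hk2
      interval_cases k <;> simp [P2, P1, step, poss, run, S0, connected]
    · rcases h with rfl | rfl
      · exact Or.inr ((L3 0).mpr rfl)
      · exact Or.inl rfl

lemma L1 (i : ℕ) :
    AchCause [drive I J, turn J, hack, hack, drive J K] S0 P1 i ↔ (i = 0 ∨ i = 2 ∨ i = 4) := by
  constructor
  · intro h
    rw [AchCause] at h
    obtain ⟨j, h1, h2, hneg, hall, hc⟩ := h
    simp only [List.length_cons, List.length_nil] at h2
    interval_cases j
    · exact absurd (hall 1 le_rfl (by simp)) (by simp [P1, step, poss, run, S0, connected])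
    · exact absurd (hall 2 le_rfl (by simp)) (by simp [P1, step, poss, run, S0, connected])
    · exact absurd (hall 3 le_rfl (by simp)) (by simp [P1, step, poss, run, S0, connected])
    · exact absurd (hall 4 le_rfl (by simp)) (by simp [P1, step, poss, run, S0, connected])
    · rcases hc with h | h
      · right; right; omega
      · rcases (L2 i).mp h with h | h
        · exact Or.inl h
        · exact Or.inr (Or.inl h)
  · intro h
    rw [AchCause]
    refine ⟨5, by omega, by simp, ?_, ?_, ?_⟩
    · simp [P1, step, poss, run, S0, connected]
    · intro k hk1 hk2
      simp only [List.length_cons, List.length_nil] at hk2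
      interval_cases k <;> simp [P1, step, poss, run, S0, connected]
    · rcases h with rfl | rfl | rfl
      · exact Or.inr ((L2 0).mpr (Or.inl rfl))
      · exact Or.inr ((L2 2).mpr (Or.inr rfl))
      · exact Or.inl rfl

/-- preemption and irrelevance in σ2: the achievement-cause indices of
⟨σ2, S0, damaged⟩ are exactly {0, 2, 4, 5}; in particular the preempted second `hack`
(index 3) changes nothing (run (σ2.take 4) S0 = run (σ2.take 3) S0) and is not a
cause, and neither are `turn J` (index 1) nor the trailing irrelevant actions
(indices 6 and 7). -/
theorem achCause_sigma2_S0 :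
    (∀ i : ℕ, AchCause σ2 S0 (fun s => s.damaged = true) i ↔ i ∈ ({0, 2, 4, 5} : Set ℕ)) ∧
    run (σ2.take 4) S0 = run (σ2.take 3) S0 := by
  constructor
  · intro i
    simp only [Set.mem_insert_iff, Set.mem_singleton_iff]
    constructor
    · intro h
      rw [AchCause] at h
      obtain ⟨j, h1, h2, hneg, hall, hc⟩ := h
      simp only [σ2, List.length_cons, List.length_nil] at h2
      interval_cases j
      · exact absurd (hall 1 le_rfl (by simp [σ2])) (by simp [σ2, step, run, S0])
      · exact absurd (hall 2 le_rfl (by simp [σ2])) (by simp [σ2, step, run, S0])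
      · exact absurd (hall 3 le_rfl (by simp [σ2])) (by simp [σ2, step, run, S0])
      · exact absurd (hall 4 le_rfl (by simp [σ2])) (by simp [σ2, step, run, S0])
      · exact absurd (hall 5 le_rfl (by simp [σ2])) (by simp [σ2, step, run, S0])
      · rcases hc with h | h
        · right; right; right; omega
        · rcases (L1 i).mp h with h | h | h
          · exact Or.inl h
          · exact Or.inr (Or.inl h)
          · exact Or.inr (Or.inr (Or.inl h))
      · exact absurd (by simp [σ2, step, run, S0]) hneg
      · exact absurd (by simp [σ2, step, run, S0]) hneg
    · intro h
      rw [AchCause]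
      refine ⟨6, by omega, by simp [σ2], ?_, ?_, ?_⟩
      · simp [σ2, step, run, S0]
      · intro k hk1 hk2
        simp only [σ2, List.length_cons, List.length_nil] at hk2
        interval_cases k <;> simp [σ2, step, run, S0]
      · rcases h with rfl | rfl | rfl | rfl
        · exact Or.inr ((L1 0).mpr (Or.inl rfl))
        · exact Or.inr ((L1 2).mpr (Or.inr (Or.inl rfl)))
        · exact Or.inr ((L1 4).mpr (Or.inr (Or.inr rfl)))
        · exact Or.inl rfl
  · rfl
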